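/- arXiv:2512.10599 — 3 statements merged into one kernel-verified Lean document; each statement's English description precedes it below -/
import Mathlib

section
/- Let P be a poset, {↑F_d : d ∈ D} a filtered family of nonempty upper sets of P, and U ⊆ P an upper set. If F_d ⊄ U for every d ∈ D, then the family {↑(F_d \ U) : d ∈ D} is filtered. -/
theorem IsUpperSet.upperClosure_diff_subset_upperClosure_diff {P : Type*} [Preorder P]
    {A B U : Set P} (hU : IsUpperSet U)
    (h : (upperClosure A : Set P) ⊆ upperClosure B) :
    (upperClosure (A \ U) : Set P) ⊆ upperClosure (B \ U) := by
  rintro x ⟨a, ⟨haA, haU⟩, hax⟩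
  obtain ⟨b, hbB, hba⟩ := h (subset_upperClosure haA)
  exact ⟨b, ⟨hbB, fun hbU => haU (hU hba hbU)⟩, hba.trans hax⟩

theorem filtered_diff_upperSet_general {P : Type*} [PartialOrder P] {D : Type*}
    (F : D → Set P) (U : Set P) (hU : IsUpperSet U)
    (hfil : ∀ d₁ d₂ : D, ∃ d₃ : D,
      (upperClosure (F d₃) : Set P) ⊆
        (upperClosure (F d₁) : Set P) ∩ (upperClosure (F d₂) : Set P)) :
    ∀ d₁ d₂ : D, ∃ d₃ : D,
      (upperClosure (F d₃ \ U) : Set P) ⊆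
        (upperClosure (F d₁ \ U) : Set P) ∩ (upperClosure (F d₂ \ U) : Set P) := by
  intro d₁ d₂
  obtain ⟨d₃, h₃⟩ := hfil d₁ d₂
  exact ⟨d₃, Set.subset_inter
    (hU.upperClosure_diff_subset_upperClosure_diff (h₃.trans Set.inter_subset_left))
    (hU.upperClosure_diff_subset_upperClosure_diff (h₃.trans Set.inter_subset_right))⟩

/-- If `{↑F_d}` is a filtered family of nonempty upper sets, `U` is an
upper set and `F_d ⊄ U` for each `d`, then `{↑(F_d \ U)}` is filtered. -/
theorem filtered_diff_upperSet {P : Type*} [PartialOrder P] {D : Type*} [Nonempty D]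
    (F : D → Set P) (U : Set P) (hU : IsUpperSet U)
    (hne : ∀ d, (F d).Nonempty)
    (hfil : ∀ d₁ d₂ : D, ∃ d₃ : D,
      (upperClosure (F d₃) : Set P) ⊆
        (upperClosure (F d₁) : Set P) ∩ (upperClosure (F d₂) : Set P))
    (hnsub : ∀ d, ¬ F d ⊆ U) :
    ∀ d₁ d₂ : D, ∃ d₃ : D,
      (upperClosure (F d₃ \ U) : Set P) ⊆
        (upperClosure (F d₁ \ U) : Set P) ∩ (upperClosure (F d₂ \ U) : Set P) :=
  filtered_diff_upperSet_general F U hU hfil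
end

section
/- Every strong R-space is strongly well-filtered. -/
/-- A subset of a topological space is saturated if it equals the intersection of
the open sets containing it. -/
def IsSaturatedSet {X : Type*} [TopologicalSpace X] (A : Set X) : Prop :=
  A = ⋂₀ {U : Set X | IsOpen U ∧ A ⊆ U}

/-- A T₀-space is a strong R-space. -/
def StrongRSpace (X : Type*) [TopologicalSpace X] : Prop :=
  ∀ S : Set (Set X), S.Nonempty →
    (∀ K ∈ S, K.Nonempty ∧ IsCompact K ∧ IsSaturatedSet K) →
    ∀ U : Set X, IsOpen U → ⋂₀ S ⊆ U →
      ∃ T : Finset (Set X), T.Nonempty ∧ ↑T ⊆ S ∧ ⋂₀ (T : Set (Set X)) ⊆ U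

/-- A T₀-space is strongly well-filtered. -/
def StronglyWellFiltered (X : Type*) [TopologicalSpace X] : Prop :=
  ∀ S : Set (Set X), S.Nonempty →
    (∀ K ∈ S, K.Nonempty ∧ IsCompact K ∧ IsSaturatedSet K) →
    (∀ K₁ ∈ S, ∀ K₂ ∈ S, ∃ K₃ ∈ S, K₃ ⊆ K₁ ∩ K₂) →
    ∀ K : Set X, K.Nonempty → IsCompact K → IsSaturatedSet K →
    ∀ U : Set X, IsOpen U → ⋂₀ S ∩ K ⊆ U →
      ∃ Kd ∈ S, Kd ∩ K ⊆ U

/-! Apply the strong R-property to the family `S ∪ {K}`: some finite subfamily has its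
intersection inside `U`. The members of that subfamily other than `K` have a common lower
bound `Kd ∈ S`, since `S` is filtered, so `Kd ∩ K` lies inside the finite intersection. -/

open Set

theorem DirectedOn.exists_mem_subset_sInter_of_finite {α : Type*} {S T : Set (Set α)}
    (hd : DirectedOn (· ⊇ ·) S) (hS : S.Nonempty) (hT : T.Finite) (hTS : T ⊆ S) :
    ∃ K ∈ S, K ⊆ ⋂₀ T := by
  induction T, hT using Set.Finite.induction_on with
  | empty =>
    obtain ⟨K, hK⟩ := hS
    exact ⟨K, hK, by simp⟩
  | @insert A T _ _ ih =>
    obtain ⟨K, hK, hKT⟩ := ih ((subset_insert A T).trans hTS)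
    obtain ⟨L, hL, hLA, hLK⟩ := hd A (hTS (mem_insert A T)) K hK
    exact ⟨L, hL, sInter_insert A T ▸ subset_inter hLA (hLK.trans hKT)⟩

theorem directedOn_superset_of_exists_subset_inter {α : Type*} {S : Set (Set α)}
    (hdir : ∀ K₁ ∈ S, ∀ K₂ ∈ S, ∃ K₃ ∈ S, K₃ ⊆ K₁ ∩ K₂) : DirectedOn (· ⊇ ·) S :=
  fun A hA B hB ↦ (hdir A hA B hB).imp fun _ ⟨hC, hCAB⟩ ↦
    ⟨hC, hCAB.trans inter_subset_left, hCAB.trans inter_subset_right⟩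

theorem strongRSpace_stronglyWellFiltered_general {X : Type*} [TopologicalSpace X]
    (h : StrongRSpace X) : StronglyWellFiltered X := by
  intro S hSne hS hdir K hKne hKc hKs U hU hSKU
  have hKS : ∀ A ∈ insert K S, A.Nonempty ∧ IsCompact A ∧ IsSaturatedSet A :=
    forall_mem_insert.2 ⟨⟨hKne, hKc, hKs⟩, hS⟩
  obtain ⟨T, -, hTS, hTU⟩ := h (insert K S) (insert_nonempty K S) hKS U hU
    (by rwa [sInter_insert, inter_comm])
  obtain ⟨Kd, hKd, hKdT⟩ :=
    (directedOn_superset_of_exists_subset_inter hdir).exists_mem_subset_sInter_of_finite hSne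
      (T.finite_toSet.sdiff) (sdiff_singleton_subset_iff.2 hTS)
  refine ⟨Kd, hKd, fun x hx ↦ hTU ?_⟩
  have hTK : ⋂₀ insert K ((T : Set (Set X)) \ {K}) ⊆ ⋂₀ (T : Set (Set X)) :=
    sInter_subset_sInter (subset_insert_sdiff_singleton K _)
  exact hTK (by rw [sInter_insert]; exact ⟨hx.2, hKdT hx.1⟩)

/-- Every strong R-space is strongly well-filtered. -/
theorem strongRSpace_stronglyWellFiltered {X : Type*} [TopologicalSpace X] [T0Space X]
    (h : StrongRSpace X) : StronglyWellFiltered X :=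
  strongRSpace_stronglyWellFiltered_general h
end

section
/- Every coherent well-filtered T₀-space is a strong R-space. -/
/-- A space is coherent if the intersection of any two compact saturated sets
is compact. -/
def CoherentSpace (X : Type*) [TopologicalSpace X] : Prop :=
  ∀ K₁ K₂ : Set X, IsCompact K₁ → IsSaturatedSet K₁ → IsCompact K₂ → IsSaturatedSet K₂ →
    IsCompact (K₁ ∩ K₂)

/-- A space is well-filtered. -/
def WellFiltered (X : Type*) [TopologicalSpace X] : Prop :=
  ∀ S : Set (Set X), S.Nonempty →
    (∀ K ∈ S, K.Nonempty ∧ IsCompact K ∧ IsSaturatedSet K) →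
    (∀ K₁ ∈ S, ∀ K₂ ∈ S, ∃ K₃ ∈ S, K₃ ⊆ K₁ ∩ K₂) →
    ∀ U : Set X, IsOpen U → ⋂₀ S ⊆ U → ∃ K ∈ S, K ⊆ U

section

variable {X : Type*} [TopologicalSpace X]

lemma IsSaturatedSet.inter {A B : Set X} (hA : IsSaturatedSet A) (hB : IsSaturatedSet B) :
    IsSaturatedSet (A ∩ B) := by
  refine subset_antisymm (fun x hx => Set.mem_sInter.2 fun U hU => hU.2 hx) fun x hx => ?_
  have mem_of_saturated {C : Set X} (hC : IsSaturatedSet C) (hABC : A ∩ B ⊆ C) : x ∈ C := by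
    rw [hC]
    exact Set.mem_sInter.2 fun U hU => Set.mem_sInter.1 hx U ⟨hU.1, hABC.trans hU.2⟩
  exact ⟨mem_of_saturated hA Set.inter_subset_left, mem_of_saturated hB Set.inter_subset_right⟩

lemma CoherentSpace.isCompact_isSaturatedSet_sInter (hcoh : CoherentSpace X)
    {T : Finset (Set X)} (hT : T.Nonempty) (hK : ∀ K ∈ T, IsCompact K ∧ IsSaturatedSet K) :
    IsCompact (⋂₀ (T : Set (Set X))) ∧ IsSaturatedSet (⋂₀ (T : Set (Set X))) := by
  induction hT using Finset.Nonempty.cons_induction with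
  | singleton K => simpa using hK K (Finset.mem_singleton_self K)
  | cons K T hKT hT ih =>
    obtain ⟨hKc, hKs⟩ := hK K (Finset.mem_cons_self K T)
    obtain ⟨hTc, hTs⟩ := ih fun L hL => hK L (Finset.mem_cons_of_mem hL)
    rw [Finset.coe_cons, Set.sInter_insert]
    exact ⟨hcoh K _ hKc hKs hTc hTs, hKs.inter hTs⟩

end

def finiteSInters {X : Type*} (S : Set (Set X)) : Set (Set X) :=
  {A | ∃ T : Finset (Set X), T.Nonempty ∧ ↑T ⊆ S ∧ A = ⋂₀ (T : Set (Set X))}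

namespace finiteSInters

variable {X : Type*} {S : Set (Set X)}

lemma subset_self : S ⊆ finiteSInters S :=
  fun K hK => ⟨{K}, Finset.singleton_nonempty K, by simpa using hK, by simp⟩

lemma exists_subset_inter {K₁ K₂ : Set X} (h₁ : K₁ ∈ finiteSInters S)
    (h₂ : K₂ ∈ finiteSInters S) : ∃ K₃ ∈ finiteSInters S, K₃ ⊆ K₁ ∩ K₂ := by
  classical
  obtain ⟨T₁, hT₁, hT₁S, rfl⟩ := h₁
  obtain ⟨T₂, -, hT₂S, rfl⟩ := h₂
  refine ⟨_, ⟨T₁ ∪ T₂, hT₁.mono Finset.subset_union_left, ?_, rfl⟩, ?_⟩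
  · rw [Finset.coe_union]
    exact Set.union_subset hT₁S hT₂S
  · rw [Finset.coe_union, Set.sInter_union]

end finiteSInters

theorem coherent_wellFiltered_strongRSpace_general {X : Type*} [TopologicalSpace X]
    (hcoh : CoherentSpace X) (hwf : WellFiltered X) : StrongRSpace X := by
  intro S hS hK U hU hSU
  rcases em (∃ A ∈ finiteSInters S, A = ∅) with ⟨_, ⟨T, hT, hTS, rfl⟩, hA⟩ | hne
  · exact ⟨T, hT, hTS, hA ▸ Set.empty_subset U⟩
  push Not at hne
  have hF : ∀ A ∈ finiteSInters S, A.Nonempty ∧ IsCompact A ∧ IsSaturatedSet A := by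
    rintro _ ⟨T, hT, hTS, rfl⟩
    exact ⟨hne _ ⟨T, hT, hTS, rfl⟩,
      hcoh.isCompact_isSaturatedSet_sInter hT fun K hKT => (hK K (hTS hKT)).2⟩
  obtain ⟨_, ⟨T, hT, hTS, rfl⟩, hTU⟩ :=
    hwf (finiteSInters S) (hS.mono finiteSInters.subset_self) hF
      (fun _ h₁ _ h₂ => finiteSInters.exists_subset_inter h₁ h₂) U hU
      ((Set.sInter_subset_sInter finiteSInters.subset_self).trans hSU)
  exact ⟨T, hT, hTS, hTU⟩

/-- Every coherent well-filtered T₀-space is a strong R-space. -/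
theorem coherent_wellFiltered_strongRSpace {X : Type*} [TopologicalSpace X] [T0Space X]
    (hcoh : CoherentSpace X) (hwf : WellFiltered X) : StrongRSpace X :=
  coherent_wellFiltered_strongRSpace_general hcoh hwf
end
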